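/- Let A : ℕ → ℕ be defined by A(0) = 1, A(1) = 2, and A(n) = 1 + C(A(n−2)+1, 2) + A(n−2)·(A(n−1) − A(n−2)) for n ≥ 2, and let φ = (1+√5)/2. Then there exist real constants c > 0 and C > 0 such that for all n ≥ 2, c·φⁿ ≤ log A(n) ≤ C·φⁿ. -/

import Mathlib

/-!
The recurrence gives `A(n) A(n+1) / 2 ≤ A(n+2) ≤ 3 A(n) A(n+1)`, so `u n = log (A n / 2)` and
`v n = log (3 A n)` satisfy the Fibonacci inequalities `u n + u (n+1) ≤ u (n+2)` and
`v (n+2) ≤ v n + v (n+1)`. Such inequalities propagate bounds of the form `c φⁿ` from two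
consecutive indices to all later ones, because `c φⁿ` itself satisfies the Fibonacci recurrence.
-/

def A : ℕ → ℕ
  | 0 => 1
  | 1 => 2
  | n + 2 => 1 + Nat.choose (A n + 1) 2 + A n * (A (n + 1) - A n)

noncomputable def φ : ℝ := (1 + Real.sqrt 5) / 2

theorem mul_pow_le_of_add_le {u : ℕ → ℝ} {x c : ℝ} {m : ℕ} (hx : x ^ 2 = x + 1)
    (hu : ∀ n, u n + u (n + 1) ≤ u (n + 2))
    (hm : c * x ^ m ≤ u m) (hm₁ : c * x ^ (m + 1) ≤ u (m + 1)) :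
    ∀ n, m ≤ n → c * x ^ n ≤ u n := by
  have key : ∀ k, c * x ^ (m + k) ≤ u (m + k) ∧ c * x ^ (m + k + 1) ≤ u (m + k + 1) := by
    intro k
    induction k with
    | zero => exact ⟨hm, hm₁⟩
    | succ k ih =>
      refine ⟨ih.2, ?_⟩
      have hpow : x ^ (m + (k + 1) + 1) = x ^ (m + k) + x ^ (m + k + 1) := by
        rw [show m + (k + 1) + 1 = m + k + 2 by ring, pow_add, hx]; ring
      calc c * x ^ (m + (k + 1) + 1) = c * x ^ (m + k) + c * x ^ (m + k + 1) := by
            rw [hpow, mul_add]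
        _ ≤ u (m + k) + u (m + k + 1) := add_le_add ih.1 ih.2
        _ ≤ u (m + (k + 1) + 1) := hu (m + k)
  intro n hn
  obtain ⟨k, rfl⟩ := Nat.exists_eq_add_of_le hn
  exact (key k).1

theorem exists_pos_mul_pow_le_of_add_le {u : ℕ → ℝ} {x : ℝ} {m : ℕ} (hx₀ : 0 < x)
    (hx : x ^ 2 = x + 1) (hu : ∀ n, u n + u (n + 1) ≤ u (n + 2))
    (hm : 0 < u m) (hm₁ : 0 < u (m + 1)) :
    ∃ c > 0, ∀ n, m ≤ n → c * x ^ n ≤ u n := by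
  refine ⟨min (u m / x ^ m) (u (m + 1) / x ^ (m + 1)), by positivity,
    mul_pow_le_of_add_le hx hu ?_ ?_⟩
  · exact (le_div_iff₀ (by positivity)).mp (min_le_left _ _)
  · exact (le_div_iff₀ (by positivity)).mp (min_le_right _ _)

theorem exists_pos_le_mul_pow_of_le_add {v : ℕ → ℝ} {x : ℝ} {m : ℕ} (hx₀ : 0 < x)
    (hx : x ^ 2 = x + 1) (hv : ∀ n, v (n + 2) ≤ v n + v (n + 1)) :
    ∃ C > 0, ∀ n, m ≤ n → v n ≤ C * x ^ n := by
  set C := max 1 (max (v m / x ^ m) (v (m + 1) / x ^ (m + 1)))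
  have hneg := mul_pow_le_of_add_le (u := fun n ↦ -v n) (c := -C) (m := m) hx
    (fun n ↦ by linarith [hv n])
    (by rw [neg_mul, neg_le_neg_iff, ← div_le_iff₀ (by positivity)]
        exact (le_max_left _ _).trans (le_max_right _ _))
    (by rw [neg_mul, neg_le_neg_iff, ← div_le_iff₀ (by positivity)]
        exact (le_max_right _ _).trans (le_max_right _ _))
  exact ⟨C, lt_max_of_lt_left one_pos, fun n hn ↦ by linarith [hneg n hn]⟩

theorem A_pos (n : ℕ) : 0 < A n := by
  cases n with
  | zero => decide
  | succ n => cases n with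
    | zero => decide
    | succ n => simp only [A]; omega

theorem two_mul_A_add_two {n : ℕ} (h : A n ≤ A (n + 1)) :
    2 * A (n + 2) + A n ^ 2 = 2 + A n + 2 * A n * A (n + 1) := by
  obtain ⟨d, hd⟩ := Nat.exists_eq_add_of_le h
  have hchoose : (A n + 1).choose 2 * 2 = (A n + 1) * A n := by
    simpa using (Nat.add_one_mul_choose_eq (A n) 1).symm
  rw [A, hd, Nat.add_sub_cancel_left]
  nlinarith [hchoose]

theorem A_le_A_succ (n : ℕ) : A n ≤ A (n + 1) := by
  induction n with
  | zero => decide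
  | succ n ih =>
    have := two_mul_A_add_two ih
    nlinarith [A_pos n]

theorem A_mul_A_succ_le (n : ℕ) : A n * A (n + 1) ≤ 2 * A (n + 2) := by
  have := two_mul_A_add_two (A_le_A_succ n)
  nlinarith [A_le_A_succ n]

theorem A_add_two_le (n : ℕ) : A (n + 2) ≤ 3 * A n * A (n + 1) := by
  have := two_mul_A_add_two (A_le_A_succ n)
  nlinarith [A_le_A_succ n, A_pos n]

theorem stmt_13 :
    ∃ c C : ℝ, 0 < c ∧ 0 < C ∧ ∀ n : ℕ, 2 ≤ n →
      c * φ ^ n ≤ Real.log (A n) ∧ Real.log (A n) ≤ C * φ ^ n := by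
  have hA : ∀ n, (0 : ℝ) < A n := fun n ↦ by exact_mod_cast A_pos n
  have hφ₀ : 0 < φ := Real.goldenRatio_pos
  have hφ : φ ^ 2 = φ + 1 := Real.goldenRatio_sq
  obtain ⟨c, hc, hlow⟩ := exists_pos_mul_pow_le_of_add_le (u := fun n ↦ Real.log (A n / 2))
    (m := 2) hφ₀ hφ (fun n ↦ by
      have : (A n * A (n + 1) : ℝ) ≤ 2 * A (n + 2) := by exact_mod_cast A_mul_A_succ_le n
      rw [← Real.log_mul (by linarith [hA n]) (by linarith [hA (n + 1)])]
      exact Real.log_le_log (by positivity [hA n, hA (n + 1)]) (by linarith))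
    (by norm_num [A, Real.log_pos]) (by norm_num [A, Real.log_pos])
  obtain ⟨C, hC, hup⟩ := exists_pos_le_mul_pow_of_le_add (v := fun n ↦ Real.log (3 * A n))
    (m := 2) hφ₀ hφ (fun n ↦ by
      have : (A (n + 2) : ℝ) ≤ 3 * A n * A (n + 1) := by exact_mod_cast A_add_two_le n
      rw [← Real.log_mul (by linarith [hA n]) (by linarith [hA (n + 1)])]
      exact Real.log_le_log (by linarith [hA (n + 2)]) (by linarith))
  refine ⟨c, C, hc, hC, fun n hn ↦ ⟨(hlow n hn).trans ?_, le_trans ?_ (hup n hn)⟩⟩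
  · exact Real.log_le_log (by linarith [hA n]) (by linarith [hA n])
  · exact Real.log_le_log (hA n) (by linarith [hA n])
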